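/- arXiv:1810.09577 — 5 statements merged into one kernel-verified Lean document; each statement's English description precedes it below -/
import Mathlib

section
/- Let (e(k)) be a sequence of vectors in ℝ^m and (X(k)) a sequence in ℝ^p such that there exist constants ℓ₁ ≥ 0 and ℓ₂ > 0 with ‖X(k−d)‖ ≤ ℓ₁ + ℓ₂ · max_{0≤τ≤k} ‖e(τ)‖ for all k ≥ d. Let η(k) = 1 if ‖e(k)‖ > 2ρ and η(k) = 0 otherwise, for a fixed ρ > 0. If lim_{k→∞} η(k)(‖e(k)‖² − 4ρ²) / (2(1 + ‖X(k−d)‖²)) = 0, then the sequence (e(k)) is bounded. -/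
/-!
If `e` were unbounded, it would have arbitrarily late record times `k`, where `‖e k‖` equals the
running maximum `max_{τ ≤ k} ‖e τ‖`. At such a time the growth bound gives
`‖X (k - d)‖ ≤ ℓ₁ + ℓ₂ ‖e k‖`, so the normalized error
`(‖e k‖² - 4ρ²) / (2 (1 + ‖X (k - d)‖²))` stays above `1 / (4 (1 + ℓ₁ + ℓ₂)²)` once `‖e k‖` is
large, contradicting its convergence to `0`.
-/

open Filter Topology Finset

theorem exists_record_gt_of_forall_exists_gt {α : Type*} [LinearOrder α] {f : ℕ → α}
    (hf : ∀ B, ∃ k, B < f k) (N : ℕ) (B : α) :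
    ∃ k ≥ N, B < f k ∧ ∀ j ≤ k, f j ≤ f k := by
  set M := max B ((range (N + 1)).sup' nonempty_range_add_one f)
  have hk : M < f (Nat.find (hf M)) := Nat.find_spec (hf M)
  refine ⟨Nat.find (hf M), ?_, (le_max_left _ _).trans_lt hk, fun j hj => ?_⟩
  · by_contra! hlt
    have : f (Nat.find (hf M)) ≤ M :=
      (le_sup' f (mem_range.mpr (by omega))).trans (le_max_right _ _)
    exact (hk.trans_le this).false
  · rcases hj.lt_or_eq with hj | rfl
    · exact (not_lt.mp (Nat.find_min (hf M) hj)).trans hk.le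
    · exact le_rfl

theorem one_div_four_mul_sq_le_sq_sub_div {ρ ℓ₁ ℓ₂ t x : ℝ} (hℓ₁ : 0 ≤ ℓ₁) (ht : 1 ≤ t)
    (htρ : 3 * |ρ| ≤ t) (hx₀ : 0 ≤ x) (hx : x ≤ ℓ₁ + ℓ₂ * t) :
    1 / (4 * (1 + ℓ₁ + ℓ₂) ^ 2) ≤ (t ^ 2 - 4 * ρ ^ 2) / (2 * (1 + x ^ 2)) := by
  have hxt : x ≤ (ℓ₁ + ℓ₂) * t := by nlinarith
  have hℓ : 0 ≤ ℓ₁ + ℓ₂ := by nlinarith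
  have hden : 1 + x ^ 2 ≤ ((1 + ℓ₁ + ℓ₂) * t) ^ 2 := by nlinarith
  have hnum : 9 * ρ ^ 2 ≤ t ^ 2 := by nlinarith [sq_abs ρ, abs_nonneg ρ]
  have hc : 0 < 1 + ℓ₁ + ℓ₂ := by linarith
  rw [div_le_div_iff₀ (by positivity) (by positivity)]
  nlinarith

theorem stmt_0_general (m p d : ℕ) (ρ ℓ₁ ℓ₂ : ℝ)
    (hℓ₁ : 0 ≤ ℓ₁) (hℓ₂ : 0 < ℓ₂)
    (e : ℕ → EuclideanSpace ℝ (Fin m)) (X : ℕ → EuclideanSpace ℝ (Fin p))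
    (η : ℕ → ℝ) (hη : ∀ k, η k = if ‖e k‖ > 2 * ρ then 1 else 0)
    (hX : ∀ k ≥ d, ‖X (k - d)‖ ≤
      ℓ₁ + ℓ₂ * (Finset.range (k + 1)).sup' Finset.nonempty_range_add_one (fun τ => ‖e τ‖))
    (hlim : Tendsto (fun k => η k * (‖e k‖ ^ 2 - 4 * ρ ^ 2) / (2 * (1 + ‖X (k - d)‖ ^ 2)))
      atTop (𝓝 0)) :
    ∃ B : ℝ, ∀ k, ‖e k‖ ≤ B := by
  by_contra! h
  have hε : (0 : ℝ) < 1 / (4 * (1 + ℓ₁ + ℓ₂) ^ 2) := by positivity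
  obtain ⟨N, hN⟩ := (hlim.eventually (gt_mem_nhds hε)).exists_forall_of_atTop
  obtain ⟨k, hk, hbig, hrecord⟩ :=
    exists_record_gt_of_forall_exists_gt h (max N d) (max 1 (3 * |ρ|))
  have hsup : (range (k + 1)).sup' nonempty_range_add_one (fun τ => ‖e τ‖) = ‖e k‖ :=
    le_antisymm (sup'_le _ _ fun j hj => hrecord j (Nat.lt_succ_iff.mp (mem_range.mp hj)))
      (le_sup' (fun τ => ‖e τ‖) (self_mem_range_succ k))
  have hη₁ : η k = 1 := by
    rw [hη, if_pos]
    linarith [le_abs_self ρ, abs_nonneg ρ, le_max_right 1 (3 * |ρ|)]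
  have hlow := one_div_four_mul_sq_le_sq_sub_div hℓ₁ ((le_max_left _ _).trans hbig.le)
    ((le_max_right _ _).trans hbig.le) (norm_nonneg _) (hsup ▸ hX k (le_of_max_le_right hk))
  have hsmall := hN k (le_of_max_le_left hk)
  rw [hη₁, one_mul] at hsmall
  linarith

theorem stmt_0 (m p d : ℕ) (hd : 1 ≤ d) (ρ ℓ₁ ℓ₂ : ℝ) (hρ : 0 < ρ)
    (hℓ₁ : 0 ≤ ℓ₁) (hℓ₂ : 0 < ℓ₂)
    (e : ℕ → EuclideanSpace ℝ (Fin m)) (X : ℕ → EuclideanSpace ℝ (Fin p))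
    (η : ℕ → ℝ) (hη : ∀ k, η k = if ‖e k‖ > 2 * ρ then 1 else 0)
    (hX : ∀ k ≥ d, ‖X (k - d)‖ ≤
      ℓ₁ + ℓ₂ * (Finset.range (k + 1)).sup' Finset.nonempty_range_add_one (fun τ => ‖e τ‖))
    (hlim : Tendsto (fun k => η k * (‖e k‖ ^ 2 - 4 * ρ ^ 2) / (2 * (1 + ‖X (k - d)‖ ^ 2)))
      atTop (𝓝 0)) :
    ∃ B : ℝ, ∀ k, ‖e k‖ ≤ B :=
  stmt_0_general m p d ρ ℓ₁ ℓ₂ hℓ₁ hℓ₂ e X η hη hX hlim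
end

section
/- Let ρ > 0 and let (e(k)) be a sequence in ℝ^m. Define η(k) = 1 if ‖e(k)‖ > 2ρ, else 0. Suppose (e(k)) is bounded and lim_{k→∞} η(k)(‖e(k)‖² − 4ρ²)/(2(1 + ‖X(k−d)‖²)) = 0 where (X(k)) is a bounded sequence. Then limsup_{k→∞} ‖e(k)‖ ≤ 2ρ. -/
open Filter Topology

theorem stmt_4 (m p d : ℕ) (hd : 1 ≤ d) (ρ : ℝ) (hρ : 0 < ρ)
    (e : ℕ → EuclideanSpace ℝ (Fin m)) (X : ℕ → EuclideanSpace ℝ (Fin p))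
    (η : ℕ → ℝ) (hη : ∀ k, η k = if ‖e k‖ > 2 * ρ then 1 else 0)
    (hebdd : ∃ B : ℝ, ∀ k, ‖e k‖ ≤ B)
    (hXbdd : ∃ C : ℝ, ∀ k, ‖X k‖ ≤ C)
    (hlim : Tendsto (fun k => η k * (‖e k‖ ^ 2 - 4 * ρ ^ 2) / (2 * (1 + ‖X (k - d)‖ ^ 2)))
      atTop (𝓝 0)) :
    Filter.limsup (fun k => ‖e k‖) atTop ≤ 2 * ρ := by
  obtain ⟨C, hC⟩ := hXbdd
  obtain ⟨B, hB⟩ := hebdd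
  have hC0 : 0 ≤ C := le_trans (norm_nonneg _) (hC 0)
  have hcob : IsCoboundedUnder (· ≤ ·) atTop (fun k => ‖e k‖) :=
    (isBoundedUnder_of ⟨0, fun k => norm_nonneg _⟩ :
      IsBoundedUnder (· ≥ ·) atTop (fun k => ‖e k‖)).isCoboundedUnder_le
  refine le_of_forall_pos_le_add fun ε hε => ?_
  have hden : (0:ℝ) < 2 * (1 + C ^ 2) := by positivity
  have hδ : (0:ℝ) < (4 * ρ * ε + ε ^ 2) / (2 * (1 + C ^ 2)) := by positivity
  have hev := (Metric.tendsto_nhds.mp hlim) _ hδ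
  refine limsup_le_of_le hcob ?_
  filter_upwards [hev] with k hk
  by_contra hgt
  push_neg at hgt
  have h2ρ : 2 * ρ < ‖e k‖ := lt_trans (by linarith) hgt
  have hηk : η k = 1 := by rw [hη k]; exact if_pos h2ρ
  have hdenk : (0:ℝ) < 2 * (1 + ‖X (k - d)‖ ^ 2) := by positivity
  have hdenk_le : 2 * (1 + ‖X (k - d)‖ ^ 2) ≤ 2 * (1 + C ^ 2) := by
    have := hC (k - d)
    nlinarith [norm_nonneg (X (k - d))]
  have hnum : 4 * ρ * ε + ε ^ 2 ≤ η k * (‖e k‖ ^ 2 - 4 * ρ ^ 2) := by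
    rw [hηk]; nlinarith
  have hge : (4 * ρ * ε + ε ^ 2) / (2 * (1 + C ^ 2)) ≤
      η k * (‖e k‖ ^ 2 - 4 * ρ ^ 2) / (2 * (1 + ‖X (k - d)‖ ^ 2)) :=
    div_le_div₀ (by nlinarith) hnum hdenk hdenk_le
  rw [Real.dist_eq, sub_zero] at hk
  have := le_abs_self (η k * (‖e k‖ ^ 2 - 4 * ρ ^ 2) / (2 * (1 + ‖X (k - d)‖ ^ 2)))
  linarith
end

section
/- Let θ be a fixed vector in ℝ^p (unknown true parameter), and define the parameter estimate update θ̂(k) = θ̂(k−d) + η(k) X(k−d) e(k)ᵀ/(1 + ‖X(k−d)‖²), where e(k) = Y(k) − θ̂(k−d)ᵀ X(k−d), Y(k) = θᵀ X(k−d) + h(k) with ‖h(k)‖ ≤ ρ, and η(k) = 1 if ‖e(k)‖ > 2ρ, else 0. Define ψ(k) = θ̂(k) − θ. Then ψ(k) = ψ(k−d) + η(k) X(k−d) e(k)ᵀ/(1 + ‖X(k−d)‖²), and moreover ‖ψ(k)‖² − ‖ψ(k−d)‖² ≤ −η(k)(‖e(k)‖² − 4ρ²)/(2(1 + ‖X(k−d)‖²))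 · c for some constant c > 0 whenever η(k) = 1, implying (‖ψ(k)‖) is bounded. -/
open Finset

/-!
Since `Y(k) = θᵀX(k-d) + h(k)`, the residual of the old error is `ψ(k-d)ᵀX(k-d) = h(k) - e(k)`.
Expanding `‖ψ(k-d) + X eᵀ/(1 + ‖X‖²)‖²` therefore turns the cross term into `2⟨e, h - e⟩`,
and with `⟨e, h⟩ ≤ ρ‖e‖` the increment is at most `(2ρ‖e‖ - ‖e‖²)/(1 + ‖X‖²)`, which is
`≤ -(‖e‖² - 4ρ²)/(2(1 + ‖X‖²))` because `(‖e‖ - 2ρ)² ≥ 0`. Outside the dead zone this is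
negative, inside it nothing changes, so `‖ψ‖` never exceeds its maximum over the first `d` steps.
-/

theorem exists_forall_le_of_forall_le_sub {α : Type*} [SemilatticeSup α] {u : ℕ → α} {d : ℕ}
    (hd : 1 ≤ d) (hu : ∀ k ≥ d, u k ≤ u (k - d)) : ∃ B, ∀ k, u k ≤ B := by
  have hne : (range d).Nonempty := nonempty_range_iff.mpr (by omega)
  refine ⟨(range d).sup' hne u, fun k => ?_⟩
  induction k using Nat.strong_induction_on with
  | _ k ih =>
    by_cases hk : k < d
    · exact le_sup' u (mem_range.mpr hk)
    · exact (hu k (by omega)).trans (ih (k - d) (by omega))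

section RankOneUpdate

variable {ι κ : Type*} [Fintype ι] [Fintype κ]

theorem Matrix.sum_sq_add_rankOne (A : Matrix ι κ ℝ) (x : ι → ℝ) (e : κ → ℝ) (c : ℝ) :
    ∑ i, ∑ j, (A i j + c * (x i * e j)) ^ 2
      = ∑ i, ∑ j, A i j ^ 2 + 2 * c * ∑ j, e j * ∑ i, A i j * x i
        + c ^ 2 * (∑ i, x i ^ 2) * ∑ j, e j ^ 2 := by
  simp only [add_sq, sum_add_distrib, mul_sum, sum_mul]
  rw [sum_comm (f := fun i j => 2 * A i j * (c * (x i * e j))),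
    sum_comm (f := fun i j => (c * (x i * e j)) ^ 2)]
  congr 1
  · congr 1
    exact sum_congr rfl fun _ _ => sum_congr rfl fun _ _ => by ring
  · exact sum_congr rfl fun _ _ => sum_congr rfl fun _ _ => by ring

theorem Matrix.sum_sq_normalizedStep_sub_le (A B : Matrix ι κ ℝ) (x : EuclideanSpace ℝ ι)
    (e h : EuclideanSpace ℝ κ) {ρ : ℝ} (hh : ‖h‖ ≤ ρ)
    (hres : ∀ j, ∑ i, A i j * x i = h j - e j)
    (hB : ∀ i j, B i j = A i j + x i * e j / (1 + ‖x‖ ^ 2)) :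
    ∑ i, ∑ j, B i j ^ 2 - ∑ i, ∑ j, A i j ^ 2
      ≤ -((‖e‖ ^ 2 - 4 * ρ ^ 2) / (2 * (1 + ‖x‖ ^ 2))) := by
  set N := 1 + ‖x‖ ^ 2 with hNdef
  have hN : 0 < N := by positivity
  have hexpand : ∑ i, ∑ j, B i j ^ 2 = ∑ i, ∑ j, A i j ^ 2
      + 2 * N⁻¹ * (∑ j, e j * h j - ‖e‖ ^ 2) + N⁻¹ ^ 2 * ‖x‖ ^ 2 * ‖e‖ ^ 2 := by
    have hcross : ∑ j, e j * ∑ i, A i j * x i = ∑ j, e j * h j - ‖e‖ ^ 2 := by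
      simp only [hres, mul_sub, sum_sub_distrib, EuclideanSpace.real_norm_sq_eq e, sq]
    rw [← hcross, EuclideanSpace.real_norm_sq_eq x, EuclideanSpace.real_norm_sq_eq e,
      ← Matrix.sum_sq_add_rankOne]
    simp only [hB, div_eq_inv_mul, mul_comm]
  have hinner : ∑ j, e j * h j ≤ ‖e‖ * ρ := by
    have := real_inner_le_norm e h
    simp only [PiLp.inner_apply, RCLike.inner_apply, conj_trivial] at this
    calc ∑ j, e j * h j = ∑ j, h j * e j := sum_congr rfl fun _ _ => mul_comm _ _
      _ ≤ ‖e‖ * ‖h‖ := this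
      _ ≤ ‖e‖ * ρ := mul_le_mul_of_nonneg_left hh (norm_nonneg e)
  have hshrink : N⁻¹ ^ 2 * ‖x‖ ^ 2 * ‖e‖ ^ 2 ≤ N⁻¹ * ‖e‖ ^ 2 := by
    rw [sq N⁻¹, mul_assoc N⁻¹, mul_assoc N⁻¹]
    refine mul_le_mul_of_nonneg_left ?_ (by positivity)
    rw [inv_mul_eq_div]
    exact mul_le_of_le_one_left (sq_nonneg _) ((div_le_one hN).mpr (by linarith))
  have hsquare : 2 * (‖e‖ * ρ) - ‖e‖ ^ 2 ≤ -((‖e‖ ^ 2 - 4 * ρ ^ 2) / 2) := by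
    nlinarith [sq_nonneg (‖e‖ - 2 * ρ)]
  have hfinal : -((‖e‖ ^ 2 - 4 * ρ ^ 2) / (2 * N))
      = N⁻¹ * -((‖e‖ ^ 2 - 4 * ρ ^ 2) / 2) := by
    field_simp
  rw [hexpand, hfinal]
  have hNinv : 0 ≤ N⁻¹ := inv_nonneg.mpr hN.le
  nlinarith [mul_le_mul_of_nonneg_left hinner hNinv, mul_le_mul_of_nonneg_left hsquare hNinv]

end RankOneUpdate

theorem stmt_6_general (m p d : ℕ) (hd : 1 ≤ d) (ρ : ℝ)
    (θ : Matrix (Fin p) (Fin m) ℝ) (θhat ψ : ℕ → Matrix (Fin p) (Fin m) ℝ)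
    (X : ℕ → EuclideanSpace ℝ (Fin p)) (Y e h : ℕ → EuclideanSpace ℝ (Fin m))
    (η : ℕ → ℝ) (hη : ∀ k, η k = if ‖e k‖ > 2 * ρ then 1 else 0)
    (hh : ∀ k, ‖h k‖ ≤ ρ)
    (hY : ∀ k ≥ d, ∀ j, Y k j = (∑ i, θ i j * X (k - d) i) + h k j)
    (he : ∀ k ≥ d, ∀ j, e k j = Y k j - ∑ i, θhat (k - d) i j * X (k - d) i)
    (hupdate : ∀ k ≥ d, ∀ i j, θhat k i j =
      θhat (k - d) i j + η k * (X (k - d) i * e k j) / (1 + ‖X (k - d)‖ ^ 2))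
    (hψ : ∀ k, ψ k = θhat k - θ) :
    (∀ k ≥ d, ∀ i j, ψ k i j =
        ψ (k - d) i j + η k * (X (k - d) i * e k j) / (1 + ‖X (k - d)‖ ^ 2))
    ∧ (∃ c > (0:ℝ), ∀ k ≥ d, η k = 1 →
        Real.sqrt (∑ i, ∑ j, (ψ k i j) ^ 2) ^ 2
          - Real.sqrt (∑ i, ∑ j, (ψ (k - d) i j) ^ 2) ^ 2
          ≤ -(η k * (‖e k‖ ^ 2 - 4 * ρ ^ 2) / (2 * (1 + ‖X (k - d)‖ ^ 2))) * c)
    ∧ (∃ B : ℝ, ∀ k, Real.sqrt (∑ i, ∑ j, (ψ k i j) ^ 2) ≤ B) := by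
  have hrec : ∀ k ≥ d, ∀ i j, ψ k i j =
      ψ (k - d) i j + η k * (X (k - d) i * e k j) / (1 + ‖X (k - d)‖ ^ 2) := by
    intro k hk i j
    rw [hψ, hψ, Matrix.sub_apply, Matrix.sub_apply, hupdate k hk]
    ring
  have hres : ∀ k ≥ d, ∀ j, ∑ i, ψ (k - d) i j * X (k - d) i = h k j - e k j := by
    intro k hk j
    simp only [hψ, Matrix.sub_apply, sub_mul, sum_sub_distrib]
    linarith [hY k hk j, he k hk j]
  have hdecr : ∀ k ≥ d, η k = 1 →
      ∑ i, ∑ j, ψ k i j ^ 2 - ∑ i, ∑ j, ψ (k - d) i j ^ 2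
        ≤ -((‖e k‖ ^ 2 - 4 * ρ ^ 2) / (2 * (1 + ‖X (k - d)‖ ^ 2))) := fun k hk hη1 =>
    Matrix.sum_sq_normalizedStep_sub_le _ _ _ _ _ (hh k) (hres k hk)
      fun i j => by rw [hrec k hk, hη1, one_mul]
  have hmono : ∀ k ≥ d, ∑ i, ∑ j, ψ k i j ^ 2 ≤ ∑ i, ∑ j, ψ (k - d) i j ^ 2 := by
    intro k hk
    by_cases hek : ‖e k‖ > 2 * ρ
    · have hρ : 0 ≤ ρ := (norm_nonneg _).trans (hh k)
      have hgap : 0 ≤ (‖e k‖ ^ 2 - 4 * ρ ^ 2) / (2 * (1 + ‖X (k - d)‖ ^ 2)) :=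
        div_nonneg (by nlinarith) (by positivity)
      linarith [hdecr k hk (by rw [hη, if_pos hek])]
    · simp only [hrec k hk, hη, if_neg hek, zero_mul, zero_div, add_zero, le_refl]
  refine ⟨hrec, ⟨1, one_pos, fun k hk hη1 => ?_⟩,
    exists_forall_le_of_forall_le_sub hd fun k hk => Real.sqrt_le_sqrt (hmono k hk)⟩
  rw [Real.sq_sqrt (by positivity), Real.sq_sqrt (by positivity), hη1, one_mul, mul_one]
  exact hdecr k hk hη1

/-- Dead-zone gradient update of the linear adaptive estimator: parameter error
recursion and boundedness.  The parameter estimate is the `p × m` matrix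
`θhat k`, the regressor `X k ∈ ℝ^p`, outputs `Y k, e k, h k ∈ ℝ^m`. -/
theorem stmt_6 (m p d : ℕ) (hd : 1 ≤ d) (ρ : ℝ) (hρ : 0 < ρ)
    (θ : Matrix (Fin p) (Fin m) ℝ) (θhat ψ : ℕ → Matrix (Fin p) (Fin m) ℝ)
    (X : ℕ → EuclideanSpace ℝ (Fin p)) (Y e h : ℕ → EuclideanSpace ℝ (Fin m))
    (η : ℕ → ℝ) (hη : ∀ k, η k = if ‖e k‖ > 2 * ρ then 1 else 0)
    (hh : ∀ k, ‖h k‖ ≤ ρ)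
    (hY : ∀ k ≥ d, ∀ j, Y k j = (∑ i, θ i j * X (k - d) i) + h k j)
    (he : ∀ k ≥ d, ∀ j, e k j = Y k j - ∑ i, θhat (k - d) i j * X (k - d) i)
    (hupdate : ∀ k ≥ d, ∀ i j, θhat k i j =
      θhat (k - d) i j + η k * (X (k - d) i * e k j) / (1 + ‖X (k - d)‖ ^ 2))
    (hψ : ∀ k, ψ k = θhat k - θ) :
    (∀ k ≥ d, ∀ i j, ψ k i j =
        ψ (k - d) i j + η k * (X (k - d) i * e k j) / (1 + ‖X (k - d)‖ ^ 2))
    ∧ (∃ c > (0:ℝ), ∀ k ≥ d, η k = 1 →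
        Real.sqrt (∑ i, ∑ j, (ψ k i j) ^ 2) ^ 2
          - Real.sqrt (∑ i, ∑ j, (ψ (k - d) i j) ^ 2) ^ 2
          ≤ -(η k * (‖e k‖ ^ 2 - 4 * ρ ^ 2) / (2 * (1 + ‖X (k - d)‖ ^ 2))) * c)
    ∧ (∃ B : ℝ, ∀ k, Real.sqrt (∑ i, ∑ j, (ψ k i j) ^ 2) ≤ B) :=
  stmt_6_general m p d hd ρ θ θhat ψ X Y e h η hη hh hY he hupdate hψ
end

section
/- With notation as in the dead-zone adaptive update (ψ(k) = θ̂(k) − θ, e(k) = −ψ(k−d)ᵀX(k−d) + h(k), ‖h(k)‖ ≤ ρ, η(k) the indicator of ‖e(k)‖ > 2ρ), the sum ∑_{k=d}^∞ η(k)(‖e(k)‖² − 4ρ²)/(2(1 + ‖X(k−d)‖²)) is finite. -/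
open Filter Topology Finset

/-! The Lyapunov function `V k = ∑ᵢⱼ ψ(k)ᵢⱼ²` decreases over each `d`-step of the update by at
least the `k`-th dead-zone term: the update is a normalized gradient step for `V`, and the
disturbance contributes at most `ρ‖e‖` to the cross term. Since `V ≥ 0`, the `d`-step telescoping
bounds every partial sum of the (nonnegative) terms by `V 0 + ⋯ + V (d - 1)`. -/

lemma EuclideanSpace.sum_mul_le_of_norm_le {ι : Type*} [Fintype ι]
    {x y : EuclideanSpace ℝ ι} {ρ : ℝ} (hx : ‖x‖ ≤ ρ) :
    ∑ i, x i * y i ≤ ρ * ‖y‖ := by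
  have hinner : inner ℝ x y = ∑ i, x i * y i := by
    simp only [PiLp.inner_apply, RCLike.inner_apply, conj_trivial, mul_comm]
  rw [← hinner]
  exact (real_inner_le_norm x y).trans (mul_le_mul_of_nonneg_right hx (norm_nonneg y))

lemma sum_sq_add_mul_outer {ι κ : Type*} [Fintype ι] [Fintype κ]
    (A : Matrix ι κ ℝ) (x : ι → ℝ) (y : κ → ℝ) (c : ℝ) :
    ∑ i, ∑ j, (A i j + c * (x i * y j)) ^ 2
      = ∑ i, ∑ j, A i j ^ 2 + 2 * c * ∑ j, (∑ i, A i j * x i) * y j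
        + c ^ 2 * ((∑ i, x i ^ 2) * ∑ j, y j ^ 2) := by
  have hpoint : ∀ i j, (A i j + c * (x i * y j)) ^ 2
      = A i j ^ 2 + 2 * c * (A i j * x i * y j) + c ^ 2 * (x i ^ 2 * y j ^ 2) := by
    intros; ring
  simp only [hpoint, sum_add_distrib, ← mul_sum, sum_mul_sum]
  rw [sum_comm (f := fun i j => A i j * x i * y j)]
  simp only [sum_mul]

lemma deadZone_step_le {ι κ : Type*} [Fintype ι] [Fintype κ] (A : Matrix ι κ ℝ)
    (x : EuclideanSpace ℝ ι) (e h : EuclideanSpace ℝ κ) {ρ η : ℝ}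
    (hη₀ : 0 ≤ η) (hη₁ : η ≤ 1) (hh : ‖h‖ ≤ ρ)
    (he : ∀ j, e j = -(∑ i, A i j * x i) + h j) :
    ∑ i, ∑ j, (A i j + η * (x i * e j) / (1 + ‖x‖ ^ 2)) ^ 2
      ≤ ∑ i, ∑ j, A i j ^ 2 - η * (‖e‖ ^ 2 - 4 * ρ ^ 2) / (2 * (1 + ‖x‖ ^ 2)) := by
  have hD : 0 < 1 + ‖x‖ ^ 2 := by positivity
  set c := η / (1 + ‖x‖ ^ 2) with hc
  have hc₀ : 0 ≤ c := by positivity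
  have hcx : c * ‖x‖ ^ 2 ≤ 1 := by
    rw [hc, div_mul_eq_mul_div, div_le_one hD]; nlinarith [sq_nonneg ‖x‖]
  have hrow : ∀ j, ∑ i, A i j * x i = h j - e j := fun j => by linarith [he j]
  have hcross : ∑ j, (h j - e j) * e j = ∑ j, h j * e j - ‖e‖ ^ 2 := by
    rw [EuclideanSpace.real_norm_sq_eq, ← sum_sub_distrib]
    exact sum_congr rfl fun j _ => by ring
  have hexpand : ∑ i, ∑ j, (A i j + η * (x i * e j) / (1 + ‖x‖ ^ 2)) ^ 2
      = ∑ i, ∑ j, A i j ^ 2 + 2 * c * (∑ j, h j * e j - ‖e‖ ^ 2)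
        + c ^ 2 * (‖x‖ ^ 2 * ‖e‖ ^ 2) := by
    simp only [mul_div_right_comm η, ← hc]
    rw [sum_sq_add_mul_outer, ← hcross, EuclideanSpace.real_norm_sq_eq x,
      EuclideanSpace.real_norm_sq_eq e]
    simp only [hrow]
  have hdead : η * (‖e‖ ^ 2 - 4 * ρ ^ 2) / (2 * (1 + ‖x‖ ^ 2))
      = c * (‖e‖ ^ 2 - 4 * ρ ^ 2) / 2 := by
    rw [hc]; field_simp
  have hhe := EuclideanSpace.sum_mul_le_of_norm_le (y := e) hh
  rw [hexpand, hdead]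
  -- with `c‖x‖² ≤ 1` and `∑ⱼ hⱼeⱼ ≤ ρ‖e‖` the claim reduces to `0 ≤ c (‖e‖ - 2ρ)²`
  nlinarith [mul_nonneg hc₀ (sq_nonneg (‖e‖ - 2 * ρ)),
    mul_le_mul_of_nonneg_left hcx (mul_nonneg hc₀ (sq_nonneg ‖e‖))]

lemma summable_of_le_sub_shift {a V : ℕ → ℝ} {d : ℕ} (ha : ∀ n, 0 ≤ a n) (hV : ∀ n, 0 ≤ V n)
    (hdesc : ∀ n, a n ≤ V n - V (n + d)) : Summable a := by
  refine summable_of_sum_range_le ha (c := ∑ i ∈ range d, V i) fun N => ?_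
  have hsplit : ∑ i ∈ range N, V i + ∑ i ∈ range d, V (N + i)
      = ∑ i ∈ range d, V i + ∑ i ∈ range N, V (i + d) := by
    rw [← sum_range_add, add_comm N d, sum_range_add]
    simp only [add_comm d]
  have htail : 0 ≤ ∑ i ∈ range d, V (N + i) := sum_nonneg fun i _ => hV _
  calc ∑ i ∈ range N, a i ≤ ∑ i ∈ range N, (V i - V (i + d)) := sum_le_sum fun i _ => hdesc i
    _ = ∑ i ∈ range N, V i - ∑ i ∈ range N, V (i + d) := sum_sub_distrib ..
    _ ≤ ∑ i ∈ range d, V i := by linarith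

lemma deadZone_term_nonneg {ι : Type*} [Fintype ι] (e : EuclideanSpace ℝ ι) {ρ : ℝ}
    (hρ : 0 ≤ ρ) (D : ℝ) (hD : 0 < D) :
    0 ≤ (if ‖e‖ > 2 * ρ then 1 else 0) * (‖e‖ ^ 2 - 4 * ρ ^ 2) / D := by
  split_ifs with hbig
  · apply div_nonneg _ hD.le
    nlinarith
  · simp

theorem stmt_7_general (m p d : ℕ) (ρ : ℝ)
    (θ : Matrix (Fin p) (Fin m) ℝ) (θhat ψ : ℕ → Matrix (Fin p) (Fin m) ℝ)
    (X : ℕ → EuclideanSpace ℝ (Fin p)) (e h : ℕ → EuclideanSpace ℝ (Fin m))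
    (η : ℕ → ℝ) (hη : ∀ k, η k = if ‖e k‖ > 2 * ρ then 1 else 0)
    (hh : ∀ k, ‖h k‖ ≤ ρ)
    (hψ : ∀ k, ψ k = θhat k - θ)
    (he : ∀ k ≥ d, ∀ j, e k j = -(∑ i, ψ (k - d) i j * X (k - d) i) + h k j)
    (hupdate : ∀ k ≥ d, ∀ i j, θhat k i j =
      θhat (k - d) i j + η k * (X (k - d) i * e k j) / (1 + ‖X (k - d)‖ ^ 2)) :
    Summable (fun k =>
      η (k + d) * (‖e (k + d)‖ ^ 2 - 4 * ρ ^ 2) / (2 * (1 + ‖X k‖ ^ 2))) := by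
  have hρ : 0 ≤ ρ := (norm_nonneg _).trans (hh 0)
  have hη_mem : ∀ k, 0 ≤ η k ∧ η k ≤ 1 := fun k => by rw [hη]; split_ifs <;> norm_num
  refine summable_of_le_sub_shift (V := fun k => ∑ i, ∑ j, ψ k i j ^ 2) (d := d)
    (fun n => by rw [hη]; exact deadZone_term_nonneg _ hρ _ (by positivity))
    (fun n => sum_nonneg fun i _ => sum_nonneg fun j _ => sq_nonneg _) fun n => ?_
  have hk : n + d ≥ d := Nat.le_add_left d n
  have hψstep : ∀ i j, ψ (n + d) i j
      = ψ n i j + η (n + d) * (X n i * e (n + d) j) / (1 + ‖X n‖ ^ 2) := fun i j => by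
    simp only [hψ, Matrix.sub_apply, hupdate _ hk, Nat.add_sub_cancel]
    ring
  have hstep := deadZone_step_le (ψ n) (X n) (e (n + d)) (h (n + d)) (hη_mem (n + d)).1
    (hη_mem (n + d)).2 (hh _) (by simpa only [Nat.add_sub_cancel] using he _ hk)
  simp only [hψstep]
  linarith

/-- Summability (property (25)) of the normalized dead-zone identification errors
under the dead-zone adaptive update. -/
theorem stmt_7 (m p d : ℕ) (hd : 1 ≤ d) (ρ : ℝ) (hρ : 0 < ρ)
    (θ : Matrix (Fin p) (Fin m) ℝ) (θhat ψ : ℕ → Matrix (Fin p) (Fin m) ℝ)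
    (X : ℕ → EuclideanSpace ℝ (Fin p)) (e h : ℕ → EuclideanSpace ℝ (Fin m))
    (η : ℕ → ℝ) (hη : ∀ k, η k = if ‖e k‖ > 2 * ρ then 1 else 0)
    (hh : ∀ k, ‖h k‖ ≤ ρ)
    (hψ : ∀ k, ψ k = θhat k - θ)
    (he : ∀ k ≥ d, ∀ j, e k j = -(∑ i, ψ (k - d) i j * X (k - d) i) + h k j)
    (hupdate : ∀ k ≥ d, ∀ i j, θhat k i j =
      θhat (k - d) i j + η k * (X (k - d) i * e k j) / (1 + ‖X (k - d)‖ ^ 2)) :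
    Summable (fun k =>
      η (k + d) * (‖e (k + d)‖ ^ 2 - 4 * ρ ^ 2) / (2 * (1 + ‖X k‖ ^ 2))) :=
  stmt_7_general m p d ρ θ θhat ψ X e h η hη hh hψ he hupdate
end

section
/- Let F(z⁻¹) = I + F₁z⁻¹ + ... + F_q z⁻^q be a stable matrix polynomial (all roots of det F(z⁻¹) strictly inside the unit disc) acting on sequences in ℝ^m, and let V(k) satisfy F(z⁻¹)V(k) = r(k) + e(k), where (r(k)) is a bounded sequence. Then there exist constants ℓ₁ ≥ 0 and ℓ₂ > 0 such that ‖V(k)‖ ≤ ℓ₁ + ℓ₂ max_{0≤τ≤k} ‖e(τ)‖ for all k. -/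
/-!
Pass to generating functions in the delay variable `X = z⁻¹`: with `A(X) = ∑ Fᵢ Xⁱ`, the
recursion reads `A(X) V(X) = U(X)` with `U = r + e`, hence `V = det(A)⁻¹ adj(A) U`. The roots of
`det A(X)` are the inverses of the roots of `det F`, so they lie outside the closed unit disc;
factoring `det A` into linear factors and expanding each inverse as a geometric series shows that
`det(A)⁻¹`, and therefore every entry of `A(X)⁻¹`, has absolutely summable coefficients. A causal
convolution with an absolutely summable kernel is bounded by the kernel's `ℓ¹` norm times the
running maximum of the input.
-/

open Finset
open scoped Matrix

namespace PowerSeries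

section NormedRing

variable {R : Type*} [NormedRing R]

theorem summable_norm_coeff_mul {φ ψ : R⟦X⟧} (hφ : Summable fun n => ‖coeff n φ‖)
    (hψ : Summable fun n => ‖coeff n ψ‖) : Summable fun n => ‖coeff n (φ * ψ)‖ := by
  simpa only [coeff_mul] using summable_norm_sum_mul_antidiagonal_of_summable_norm hφ hψ

theorem summable_norm_coeff_coe (p : Polynomial R) : Summable fun n => ‖coeff n (p : R⟦X⟧)‖ :=
  summable_of_ne_finset_zero (s := p.support) fun n hn => by
    simp [Polynomial.coeff_coe, Polynomial.notMem_support_iff.mp hn]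

theorem norm_coeff_mul_le {φ ψ : R⟦X⟧} (hφ : Summable fun n => ‖coeff n φ‖) {k : ℕ} {M : ℝ}
    (hψ : ∀ t ≤ k, ‖coeff t ψ‖ ≤ M) : ‖coeff k (φ * ψ)‖ ≤ (∑' n, ‖coeff n φ‖) * M := by
  have hM : 0 ≤ M := (norm_nonneg _).trans (hψ 0 k.zero_le)
  calc ‖coeff k (φ * ψ)‖
      ≤ ∑ i ∈ range (k + 1), ‖coeff i φ‖ * ‖coeff (k - i) ψ‖ := by
        rw [coeff_mul, Nat.sum_antidiagonal_eq_sum_range_succ_mk]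
        exact (norm_sum_le _ _).trans (sum_le_sum fun i _ => norm_mul_le _ _)
    _ ≤ ∑ i ∈ range (k + 1), ‖coeff i φ‖ * M :=
        sum_le_sum fun i _ => mul_le_mul_of_nonneg_left (hψ _ (k.sub_le i)) (norm_nonneg _)
    _ ≤ (∑' n, ‖coeff n φ‖) * M := by
        rw [← sum_mul]
        exact mul_le_mul_of_nonneg_right (hφ.sum_le_tsum _ fun _ _ => norm_nonneg _) hM

end NormedRing

section NormedField

variable {𝕜 : Type*} [NormedField 𝕜]

theorem inv_X_sub_C {a : 𝕜} (ha : a ≠ 0) :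
    (X - C a)⁻¹ = -invUnitsSub (Units.mk0 a ha) := by
  rw [inv_eq_iff_mul_eq_one (by simpa using ha), neg_mul_comm, neg_sub]
  exact invUnitsSub_mul_sub _

theorem summable_norm_coeff_inv_X_sub_C {a : 𝕜} (ha : 1 < ‖a‖) :
    Summable fun n => ‖coeff n (X - C a)⁻¹‖ := by
  have ha0 : a ≠ 0 := norm_pos_iff.mp (one_pos.trans ha)
  have hlt : ‖a⁻¹‖ < 1 := by rw [norm_inv]; exact inv_lt_one_of_one_lt₀ ha
  refine ((summable_geometric_of_lt_one (norm_nonneg _) hlt).mul_left ‖a⁻¹‖).congr fun n => ?_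
  simp [inv_X_sub_C ha0, pow_succ']
  ring

theorem map_inv {K : Type*} [Field K] (f : 𝕜 →+* K) (φ : 𝕜⟦X⟧) :
    map f φ⁻¹ = (map f φ)⁻¹ := by
  have hf : constantCoeff (map f φ) = f (constantCoeff φ) := by
    rw [← coeff_zero_eq_constantCoeff_apply, coeff_map, coeff_zero_eq_constantCoeff_apply]
  by_cases h : constantCoeff φ = 0
  · rw [inv_eq_zero.mpr h, map_zero, eq_comm, inv_eq_zero, hf, h, map_zero]
  · rw [eq_inv_iff_mul_eq_one (by rwa [hf, map_ne_zero]), ← map_mul,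
      PowerSeries.inv_mul_cancel _ h, map_one]

theorem summable_norm_coeff_inv_prod_X_sub_C (s : Multiset 𝕜) (hs : ∀ x ∈ s, 1 < ‖x‖) :
    Summable fun n => ‖coeff n ((s.map fun x => X - C x).prod)⁻¹‖ := by
  induction s using Multiset.induction with
  | empty => simpa using summable_norm_coeff_coe (1 : Polynomial 𝕜)
  | cons a s ih =>
    rw [Multiset.map_cons, Multiset.prod_cons, PowerSeries.mul_inv_rev]
    exact summable_norm_coeff_mul (ih fun x hx => hs x (Multiset.mem_cons_of_mem hx))
      (summable_norm_coeff_inv_X_sub_C (hs a (Multiset.mem_cons_self a s)))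

theorem summable_norm_coeff_inv_of_one_lt_norm_roots [IsAlgClosed 𝕜] {p : Polynomial 𝕜}
    (hroots : ∀ z, p.eval z = 0 → 1 < ‖z‖) : Summable fun n => ‖coeff n (p : 𝕜⟦X⟧)⁻¹‖ := by
  rw [(IsAlgClosed.splits p).eq_prod_roots]
  have hprod := map_multiset_prod (Polynomial.coeToPowerSeries.ringHom (R := 𝕜))
    (p.roots.map fun x => Polynomial.X - Polynomial.C x)
  simp only [Polynomial.coeToPowerSeries.ringHom_apply, Multiset.map_map, Function.comp_def,
    Polynomial.coe_sub, Polynomial.coe_X, Polynomial.coe_C] at hprod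
  rw [Polynomial.coe_mul, hprod, Polynomial.coe_C, PowerSeries.mul_inv_rev, C_inv]
  simp only [coeff_mul_C, norm_mul]
  exact (summable_norm_coeff_inv_prod_X_sub_C _ fun x hx =>
    hroots x (Polynomial.isRoot_of_mem_roots hx)).mul_right _

end NormedField

theorem summable_norm_coeff_inv_of_one_lt_norm_complex_roots {p : Polynomial ℝ}
    (hroots : ∀ z : ℂ, (p.map Complex.ofRealHom).eval z = 0 → 1 < ‖z‖) :
    Summable fun n => ‖coeff n (p : ℝ⟦X⟧)⁻¹‖ := by
  have := summable_norm_coeff_inv_of_one_lt_norm_roots hroots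
  rw [Polynomial.polynomial_map_coe, ← map_inv] at this
  simpa [coeff_map] using this

end PowerSeries

theorem EuclideanSpace.norm_le_sum_norm {𝕜 ι : Type*} [RCLike 𝕜] [Fintype ι]
    (x : EuclideanSpace 𝕜 ι) : ‖x‖ ≤ ∑ i, ‖x i‖ := by
  conv_lhs => rw [← (EuclideanSpace.basisFun ι 𝕜).sum_repr x]
  refine (norm_sum_le _ _).trans (le_of_eq ?_)
  simp [norm_smul]

section MatrixPolynomial

open Polynomial

variable {n R : Type*} [Fintype n] [CommRing R] {q : ℕ}

noncomputable def matrixPolynomial (F : Fin (q + 1) → Matrix n n R) : Matrix n n R[X] :=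
  Matrix.of fun a l => ∑ i, C (F i a l) * X ^ (i : ℕ)

theorem eval_map_det_matrixPolynomial [DecidableEq n] {S : Type*} [CommRing S] (f : R →+* S)
    (F : Fin (q + 1) → Matrix n n R) (w : S) :
    ((matrixPolynomial F).det.map f).eval w =
      (∑ i : Fin (q + 1), w ^ (i : ℕ) • (F i).map f).det := by
  rw [eval_map, ← coe_eval₂RingHom, RingHom.map_det]
  congr 1
  ext a l
  simp only [RingHom.mapMatrix_apply, Matrix.map_apply, matrixPolynomial, Matrix.of_apply,
    map_sum, Matrix.sum_apply, Matrix.smul_apply]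
  refine sum_congr rfl fun i _ => ?_
  rw [coe_eval₂RingHom, eval₂_mul, eval₂_C, eval₂_X_pow, smul_eq_mul, mul_comm]

theorem mulVec_matrixPolynomial_mk (F : Fin (q + 1) → Matrix n n R) (V : ℤ → n → R)
    (hV : ∀ j < 0, V j = 0) :
    (matrixPolynomial F).map coeToPowerSeries.ringHom *ᵥ (fun l => PowerSeries.mk fun k => V k l) =
      fun a => PowerSeries.mk fun k => ∑ i, ∑ l, F i a l * V (k - i) l := by
  funext a
  ext k
  simp only [Matrix.mulVec, dotProduct, Matrix.map_apply, matrixPolynomial, Matrix.of_apply,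
    map_sum, map_mul, map_pow, coeToPowerSeries.ringHom_apply, coe_C, coe_X, sum_mul, mul_assoc,
    PowerSeries.coeff_C_mul, PowerSeries.coeff_X_pow_mul', PowerSeries.coeff_mk]
  rw [sum_comm]
  refine sum_congr rfl fun i _ => sum_congr rfl fun l _ => ?_
  split_ifs with h
  · rw [Nat.cast_sub h]
  · rw [hV _ (by omega), Pi.zero_apply, mul_zero]

end MatrixPolynomial

theorem one_lt_norm_of_det_sum_pow_smul_eq_zero {n : Type*} [Fintype n] [DecidableEq n] {q : ℕ}
    {G : Fin (q + 1) → Matrix n n ℂ} (hG0 : G 0 = 1)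
    (hstable : ∀ z : ℂ, (∑ i : Fin (q + 1), z ^ (q - (i : ℕ)) • G i).det = 0 → ‖z‖ < 1)
    {w : ℂ} (hw : (∑ i : Fin (q + 1), w ^ (i : ℕ) • G i).det = 0) : 1 < ‖w‖ := by
  have hw0 : w ≠ 0 := by
    rintro rfl
    rw [Fintype.sum_eq_single 0 fun i hi => by simp [Fin.val_ne_zero_iff.mpr hi]] at hw
    simp [hG0] at hw
  have hrev : ∑ i : Fin (q + 1), w⁻¹ ^ (q - (i : ℕ)) • G i =
      w⁻¹ ^ q • ∑ i : Fin (q + 1), w ^ (i : ℕ) • G i := by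
    rw [smul_sum]
    refine sum_congr rfl fun i _ => ?_
    rw [smul_smul, pow_sub₀ _ (inv_ne_zero hw0) (Fin.is_le i)]
    simp
  have := hstable w⁻¹ (by rw [hrev, Matrix.det_smul, hw, mul_zero])
  rwa [norm_inv, inv_lt_one₀ (norm_pos_iff.mpr hw0)] at this

open PowerSeries in
theorem exists_sum_norm_coeff_le_of_mulVec_eq {n : Type*} [Fintype n] [DecidableEq n]
    (A : Matrix n n (Polynomial ℝ))
    (hroots : ∀ z : ℂ, (A.det.map Complex.ofRealHom).eval z = 0 → 1 < ‖z‖) :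
    ∃ S, 0 ≤ S ∧ ∀ W U : n → ℝ⟦X⟧, A.map Polynomial.coeToPowerSeries.ringHom *ᵥ W = U →
      ∀ (k : ℕ) (M : ℝ), (∀ t ≤ k, ∀ a, ‖coeff t (U a)‖ ≤ M) →
        ∑ l, ‖coeff k (W l)‖ ≤ S * M := by
  set ρ := Polynomial.coeToPowerSeries.ringHom (R := ℝ)
  set D : ℝ⟦X⟧ := ρ A.det
  set H : n → n → ℝ⟦X⟧ := fun l a => D⁻¹ * A.adjugate l a
  have hD : constantCoeff D ≠ 0 := by
    rw [show D = A.det from rfl, Polynomial.constantCoeff_coe]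
    intro h0
    have := hroots 0 (by
      rw [← Polynomial.coeff_zero_eq_eval_zero, Polynomial.coeff_map, h0, map_zero])
    norm_num at this
  have hH : ∀ l a, Summable fun n => ‖coeff n (H l a)‖ := fun l a =>
    summable_norm_coeff_mul (summable_norm_coeff_inv_of_one_lt_norm_complex_roots hroots)
      (summable_norm_coeff_coe _)
  refine ⟨∑ l, ∑ a, ∑' n, ‖coeff n (H l a)‖,
    sum_nonneg fun _ _ => sum_nonneg fun _ _ => tsum_nonneg fun _ => norm_nonneg _,
    fun W U hWU k M hU => ?_⟩
  have hW : ∀ l, W l = ∑ a, H l a * U a := by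
    have hadj : (A.adjugate.map ρ) *ᵥ U = D • W := by
      rw [← hWU, Matrix.mulVec_mulVec, ← RingHom.mapMatrix_apply, RingHom.map_adjugate,
        RingHom.mapMatrix_apply, Matrix.adjugate_mul, ← RingHom.mapMatrix_apply, ← RingHom.map_det,
        Matrix.smul_mulVec, Matrix.one_mulVec]
    intro l
    have hl := congrFun hadj l
    simp only [Matrix.mulVec, dotProduct, Matrix.map_apply, Pi.smul_apply, smul_eq_mul] at hl
    rw [← one_mul (W l), ← PowerSeries.inv_mul_cancel _ hD, mul_assoc, ← hl, mul_sum]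
    simp only [H, mul_assoc]
    rfl
  calc ∑ l, ‖coeff k (W l)‖ ≤ ∑ l, ∑ a, ‖coeff k (H l a * U a)‖ := by
        refine sum_le_sum fun l _ => ?_
        rw [hW l, map_sum]
        exact norm_sum_le _ _
    _ ≤ ∑ l, ∑ a, (∑' n, ‖coeff n (H l a)‖) * M :=
        sum_le_sum fun l _ => sum_le_sum fun a _ =>
          norm_coeff_mul_le (hH l a) fun t ht => hU t ht a
    _ = (∑ l, ∑ a, ∑' n, ‖coeff n (H l a)‖) * M := by simp only [sum_mul]

/-- Stable matrix-polynomial filter estimate (28)/(30): if `F(z⁻¹)V(k) = r(k) + e(k)`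
with `F` stable (all roots of `det` strictly inside the unit disc) and `r` bounded,
then `‖V(k)‖` is bounded affinely by the running maximum of `‖e‖`.
`V : ℤ → ℝ^m` with `V j = 0` for `j < 0` encodes zero initial conditions. -/
theorem stmt_16 (m q : ℕ)
    (F : Fin (q + 1) → Matrix (Fin m) (Fin m) ℝ) (hF0 : F 0 = 1)
    (hstable : ∀ z : ℂ,
      (∑ i : Fin (q + 1), z ^ (q - (i : ℕ)) • (F i).map (Complex.ofReal)).det = 0 →
        ‖z‖ < 1)
    (V : ℤ → EuclideanSpace ℝ (Fin m)) (r e : ℕ → EuclideanSpace ℝ (Fin m))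
    (hV0 : ∀ j : ℤ, j < 0 → V j = 0)
    (heq : ∀ (k : ℕ) (a : Fin m),
      ∑ i : Fin (q + 1), ∑ l, F i a l * V ((k : ℤ) - (i : ℕ)) l = r k a + e k a)
    (hr : ∃ R : ℝ, ∀ k, ‖r k‖ ≤ R) :
    ∃ ℓ₁ : ℝ, 0 ≤ ℓ₁ ∧ ∃ ℓ₂ : ℝ, 0 < ℓ₂ ∧ ∀ k : ℕ, ‖V (k : ℤ)‖ ≤
      ℓ₁ + ℓ₂ * (Finset.range (k + 1)).sup' Finset.nonempty_range_add_one (fun τ => ‖e τ‖) := by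
  obtain ⟨R, hR⟩ := hr
  have hroots : ∀ z : ℂ, ((matrixPolynomial F).det.map Complex.ofRealHom).eval z = 0 → 1 < ‖z‖ :=
    fun z hz => one_lt_norm_of_det_sum_pow_smul_eq_zero (G := fun i => (F i).map Complex.ofReal)
      (by simp [hF0]) hstable (by rwa [eval_map_det_matrixPolynomial] at hz)
  obtain ⟨S, hS, hbound⟩ := exists_sum_norm_coeff_le_of_mulVec_eq _ hroots
  have hfilter := mulVec_matrixPolynomial_mk F (fun j l => V j l) fun j hj =>
    funext fun l => by simp [hV0 j hj]
  refine ⟨S * R, mul_nonneg hS ((norm_nonneg _).trans (hR 0)), S + 1, by positivity, fun k => ?_⟩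
  set B := (range (k + 1)).sup' nonempty_range_add_one fun τ => ‖e τ‖
  have hB : 0 ≤ B := (norm_nonneg _).trans (le_sup' (fun τ => ‖e τ‖) (mem_range.mpr k.succ_pos))
  have hinput : ∀ t ≤ k, ∀ a, ‖PowerSeries.coeff t
      (PowerSeries.mk fun k => ∑ i, ∑ l, F i a l * V (k - i) l)‖ ≤ R + B := by
    intro t ht a
    rw [PowerSeries.coeff_mk, heq]
    refine (norm_add_le _ _).trans (add_le_add ((PiLp.norm_apply_le _ _).trans (hR t))
      ((PiLp.norm_apply_le _ _).trans (le_sup' (fun τ => ‖e τ‖) ?_)))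
    exact mem_range.mpr (Nat.lt_succ_of_le ht)
  calc ‖V k‖ ≤ ∑ l, ‖V k l‖ := EuclideanSpace.norm_le_sum_norm _
    _ ≤ S * (R + B) := by simpa using hbound _ _ hfilter k (R + B) hinput
    _ ≤ S * R + (S + 1) * B := by nlinarith
end
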